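/- arXiv:1903.04266 — 2 statements merged into one kernel-verified Lean document; each statement's English description precedes it below -/
import Mathlib

section
/- Let k be a field that is not algebraic over a finite subfield, and let R be a k-algebra that is left primitive and not left artinian. Then R contains a free noncyclic subsemigroup. -/
/-!
Let `M` be a faithful simple `R`-module and `D = End_R M`. If `M` were finitely generated over
`D`, then `r ↦ (r • m)_{m ∈ s}` for a finite `D`-spanning set `s` would embed `R` into the
artinian module `M^s`. Hence there are `e₀ ≠ 0` and `e₁ ∉ D e₀`, and by Jacobson density there
are `x, y ∈ R` with `x e₀ = y e₀ = t e₀`, `x e₁ = e₀ + e₁`, `y e₁ = e₁`. On the line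
`a ↦ a e₀ + e₁` they act as the affine maps `a ↦ t a + 1` and `a ↦ t a` of `k`, which generate a
free semigroup as soon as `t` is the image of a regular non-unit `τ` under an injective ring map:
`τ = 2 ∈ ℤ` in characteristic zero, and `τ = X ∈ F[X]` with `t` transcendental over the prime
field `F` in characteristic `p`.
-/

universe u v

/-- A ring (or semigroup) `R` contains a free noncyclic subsemigroup if there
are `x y : R` such that the multiplicative subsemigroup they generate is free
on `{x, y}`, i.e. the canonical semigroup homomorphism from the free semigroup
on two generators sending the generators to `x` and `y` is injective. -/
def HasFreeNoncyclicSubsemigroup (R : Type*) [Semigroup R] : Prop :=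
  ∃ x y : R, Function.Injective
    ⇑(FreeSemigroup.lift (fun b : Bool => if b then x else y))

/-- A field `k` is not algebraic over a finite subfield if there is no finite
subfield `F` of `k` such that every element of `k` is algebraic over `F`. -/
def NotAlgebraicOverFiniteSubfield (k : Type*) [Field k] : Prop :=
  ¬ ∃ F : Subfield k, Finite F ∧ ∀ x : k, IsAlgebraic F x

/-- A ring is left primitive if it has a faithful simple left module. -/
def IsLeftPrimitiveRing (R : Type u) [Ring R] : Prop :=
  ∃ (M : Type u) (_ : AddCommGroup M) (_ : Module R M),
    IsSimpleModule R M ∧ FaithfulSMul R M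

open Function Polynomial

theorem FreeSemigroup.lift_injective_of_freeMonoid {α M : Type*} [Monoid M] {f : α → M}
    (hf : Injective (FreeMonoid.lift f)) : Injective (FreeSemigroup.lift f) := by
  have : FreeSemigroup.lift f = (FreeMonoid.lift f).toMulHom.comp FreeSemigroup.toFreeMonoid :=
    FreeSemigroup.hom_ext rfl
  rw [this]
  exact hf.comp FreeSemigroup.toFreeMonoid_injective

theorem FreeMonoid.lift_injective_of_intertwining {α R M B V : Type*} [Monoid R] [MulAction R M]
    [Monoid B] [MulAction B V] [FaithfulSMul B V] {f : α → R} {g : α → B} {ι : V → M}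
    (hι : Injective ι) (hfg : ∀ a v, f a • ι v = ι (g a • v))
    (hg : Injective (FreeMonoid.lift g)) : Injective (FreeMonoid.lift f) := by
  have key : ∀ w v, FreeMonoid.lift f w • ι v = ι (FreeMonoid.lift g w • v) := by
    intro w
    induction w using FreeMonoid.inductionOn' with
    | one => simp
    | of_mul a w ih => intro v; simp [mul_smul, ih, hfg]
  intro w w' hw
  refine hg (eq_of_smul_eq_smul fun v => hι ?_)
  rw [← key, ← key, hw]

def appendDigit {P : Type*} [CommRing P] (τ : P) (b : Bool) : Function.End P :=
  fun a => τ * a + b.toNat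

theorem appendDigit_map {P Q : Type*} [CommRing P] [CommRing Q] (φ : P →+* Q) (τ : P) (b : Bool)
    (a : P) : appendDigit (φ τ) b (φ a) = φ (appendDigit τ b a) := by
  simp [appendDigit]

theorem Bool.eq_of_dvd_toNat_sub {P : Type*} [CommRing P] {τ : P} (hτ : ¬IsUnit τ) {b b' : Bool}
    (h : τ ∣ (b.toNat : P) - b'.toNat) : b = b' := by
  cases b <;> cases b' <;> simp_all [isUnit_of_dvd_one]

section appendDigit

variable {P : Type*} [CommRing P] {τ : P}

theorem FreeMonoid.lift_appendDigit_of_mul (b : Bool) (w : FreeMonoid Bool) (a : P) :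
    FreeMonoid.lift (appendDigit τ) (.of b * w) a =
      τ * FreeMonoid.lift (appendDigit τ) w a + b.toNat := by
  rw [map_mul, FreeMonoid.lift_eval_of, Function.End.mul_def]
  rfl

-- The outermost digit of a word is read off modulo `τ`, then `τ` is cancelled.
theorem FreeMonoid.lift_appendDigit_injective (hτ : IsLeftRegular τ) (hunit : ¬IsUnit τ) :
    Injective (FreeMonoid.lift (appendDigit τ)) := by
  have ne_one (b : Bool) (w : FreeMonoid Bool) :
      FreeMonoid.lift (appendDigit τ) (.of b * w) ≠ 1 := by
    intro h
    have h₀ := congrArg (· 0) h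
    have h₁ := congrArg (· 1) h
    simp only [FreeMonoid.lift_appendDigit_of_mul] at h₀ h₁
    refine hunit (isUnit_of_dvd_one ⟨FreeMonoid.lift (appendDigit τ) w 1 -
      FreeMonoid.lift (appendDigit τ) w 0, ?_⟩)
    change _ = (1 : P) at h₁
    change _ = (0 : P) at h₀
    linear_combination h₁.symm - h₀.symm
  intro w
  induction w using FreeMonoid.inductionOn' with
  | one =>
    intro w' h
    cases w' using FreeMonoid.casesOn with
    | one => rfl
    | of_mul b' w' => exact absurd h.symm (ne_one b' w')
  | of_mul b w ih =>
    intro w' h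
    cases w' using FreeMonoid.casesOn with
    | one => exact absurd h (ne_one b w)
    | of_mul b' w' =>
      have hval (a : P) := congrArg (· a) h
      simp only [FreeMonoid.lift_appendDigit_of_mul] at hval
      obtain rfl : b = b' := Bool.eq_of_dvd_toNat_sub hunit
        ⟨FreeMonoid.lift (appendDigit τ) w' 0 - FreeMonoid.lift (appendDigit τ) w 0, by
          linear_combination hval 0⟩
      rw [ih (funext fun a => hτ (add_right_cancel (hval a)))]

end appendDigit

theorem FreeMonoid.lift_appendDigit_injective_of_injective {P Q : Type*} [CommRing P] [CommRing Q]
    {φ : P →+* Q} (hφ : Injective φ) {τ : P} (hτ : IsLeftRegular τ) (hunit : ¬IsUnit τ) :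
    Injective (FreeMonoid.lift (appendDigit (φ τ))) :=
  FreeMonoid.lift_injective_of_intertwining hφ (fun b a => appendDigit_map φ τ b a)
    (FreeMonoid.lift_appendDigit_injective hτ hunit)

theorem exists_lift_appendDigit_injective {k : Type*} [Field k]
    (hk : NotAlgebraicOverFiniteSubfield k) :
    ∃ t : k, Injective (FreeMonoid.lift (appendDigit t)) := by
  obtain ⟨p, hp⟩ := CharP.exists k
  rcases CharP.char_is_prime_or_zero k p with hprime | rfl
  · have : Fact p.Prime := ⟨hprime⟩
    let F : Subfield k := (ZMod.castHom dvd_rfl k).fieldRange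
    have hF : Finite F := by
      change Finite (F : Set k)
      rw [RingHom.coe_fieldRange]
      exact Set.finite_range _
    obtain ⟨t, ht⟩ : ∃ t : k, Transcendental F t := by
      by_contra! h
      exact hk ⟨F, hF, fun t => not_not.mp (h t)⟩
    have hX : IsLeftRegular (X : F[X]) := (IsRegular.of_ne_zero X_ne_zero).left
    have hXunit : ¬IsUnit (X : F[X]) := not_isUnit_X
    exact ⟨_, FreeMonoid.lift_appendDigit_injective_of_injective
      (φ := (aeval t).toRingHom) (transcendental_iff_injective.mp ht) hX hXunit⟩
  · have := CharP.charP_to_charZero k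
    exact ⟨Int.castRingHom k 2, FreeMonoid.lift_appendDigit_injective_of_injective
      (φ := Int.castRingHom k) Int.cast_injective (IsRegular.of_ne_zero two_ne_zero).left
      (by decide)⟩

theorem IsArtinianRing.of_finite_moduleEnd {R M : Type*} [Ring R] [AddCommGroup M] [Module R M]
    [IsArtinian R M] [FaithfulSMul R M] [Module.Finite (Module.End R M) M] : IsArtinianRing R := by
  obtain ⟨s, hs⟩ := Module.Finite.fg_top (R := Module.End R M) (M := M)
  let φ : R →ₗ[R] (s → M) := LinearMap.pi fun m => LinearMap.toSpanSingleton R M m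
  have hφ : Injective φ := by
    rw [injective_iff_map_eq_zero]
    intro r hr
    -- `r • ·` is `End R M`-linear, so it vanishes on the span of `s`.
    have hr' : Module.toModuleEnd (Module.End R M) M r = 0 :=
      LinearMap.ext_on hs fun m hm => congrFun hr ⟨m, hm⟩
    refine eq_of_smul_eq_smul (α := M) fun m => ?_
    simpa using LinearMap.congr_fun hr' m
  exact isArtinian_of_injective φ hφ

theorem exists_notMem_span_singleton_of_not_finite {D M : Type*} [Semiring D] [AddCommMonoid M]
    [Module D M] [Nontrivial M] (h : ¬Module.Finite D M) : ∃ e₀ e₁ : M, e₀ ≠ 0 ∧ e₁ ∉ D ∙ e₀ := by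
  obtain ⟨e₀, he₀⟩ := exists_ne (0 : M)
  have hspan : D ∙ e₀ ≠ ⊤ := fun htop => h (Module.Finite.of_fg_top ⟨{e₀}, by simpa using htop⟩)
  obtain ⟨e₁, he₁⟩ := SetLike.exists_not_mem_of_ne_top _ hspan
  exact ⟨e₀, e₁, he₀, he₁⟩

theorem IsSimpleModule.exists_smul_eq_pair {R M : Type*} [Ring R] [AddCommGroup M] [Module R M]
    [IsSimpleModule R M] {e₀ e₁ : M} (h₀ : e₀ ≠ 0) (h₁ : e₁ ∉ Module.End R M ∙ e₀) (a b : M) :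
    ∃ r : R, r • e₀ = a ∧ r • e₁ = b := by
  classical
  obtain ⟨g₀, -, hg₀⟩ := LinearMap.exists_extend_of_notMem
    (0 : (⊥ : Submodule (Module.End R M) M) →ₗ[Module.End R M] M) (by simpa using h₀) a
  obtain ⟨g, hg, hg₁⟩ := LinearMap.exists_extend_of_notMem
    (g₀.comp (Module.End R M ∙ e₀).subtype) h₁ b
  have hg₀' : g e₀ = a := by
    rw [← hg₀]
    exact LinearMap.congr_fun hg ⟨e₀, Submodule.mem_span_singleton_self e₀⟩
  obtain ⟨r, hr⟩ := jacobson_density g {e₀, e₁}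
  exact ⟨r, by rw [← hr e₀ (by simp), hg₀'], by rw [← hr e₁ (by simp), hg₁]⟩

section AlgebraMapSmul

variable {k R M : Type*} [Ring R] [AddCommGroup M] [Module R M]

theorem algebraMap_smul_left_injective [Field k] [Algebra k R] {m : M} (hm : m ≠ 0) :
    Injective fun a : k => algebraMap k R a • m := by
  intro a a' h
  by_contra hne
  have hu : IsUnit (algebraMap k R (a - a')) := (IsUnit.mk0 _ (sub_ne_zero.mpr hne)).map _
  refine hm (hu.smul_eq_zero.mp ?_)
  rw [map_sub, sub_smul]
  exact sub_eq_zero.mpr h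

theorem smul_algebraMap_smul_add [CommSemiring k] [Algebra k R] {r : R} {t d : k} {e₀ e₁ : M}
    (h₀ : r • e₀ = algebraMap k R t • e₀) (h₁ : r • e₁ = algebraMap k R d • e₀ + e₁) (a : k) :
    r • (algebraMap k R a • e₀ + e₁) = algebraMap k R (t * a + d) • e₀ + e₁ := by
  rw [smul_add, ← mul_smul, ← Algebra.commutes, mul_smul, h₀, h₁, ← mul_smul, ← add_assoc,
    ← add_smul, ← map_mul, ← map_add, mul_comm a t]

end AlgebraMapSmul

/-- If `k` is a field not algebraic over a finite subfield and the `k`-algebra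
`R` is left primitive and not left artinian, then `R` contains a free
noncyclic subsemigroup. -/
theorem free_subsemigroup_of_nonartinian_primitive
    {k : Type v} [Field k] (hk : NotAlgebraicOverFiniteSubfield k)
    {R : Type u} [Ring R] [Algebra k R]
    (hprim : IsLeftPrimitiveRing R) (hart : ¬ IsArtinianRing R) :
    HasFreeNoncyclicSubsemigroup R := by
  obtain ⟨t, ht⟩ := exists_lift_appendDigit_injective hk
  obtain ⟨M, _, _, _, _⟩ := hprim
  have hinf : ¬Module.Finite (Module.End R M) M := fun _ =>
    hart (IsArtinianRing.of_finite_moduleEnd (M := M))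
  have := IsSimpleModule.nontrivial R M
  obtain ⟨e₀, e₁, he₀, he₁⟩ := exists_notMem_span_singleton_of_not_finite hinf
  -- `f b` acts on `a e₀ + e₁` as `appendDigit t b` acts on `a`.
  choose f hf₀ hf₁ using fun b : Bool => IsSimpleModule.exists_smul_eq_pair he₀ he₁
    (algebraMap k R t • e₀) (algebraMap k R (b.toNat : k) • e₀ + e₁)
  refine ⟨f true, f false, ?_⟩
  have hf : (fun b : Bool => if b then f true else f false) = f := by
    funext b
    cases b <;> rfl
  rw [hf]
  refine FreeSemigroup.lift_injective_of_freeMonoid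
    (FreeMonoid.lift_injective_of_intertwining (ι := fun a : k => algebraMap k R a • e₀ + e₁)
      ?_ (fun b a => ?_) ht)
  · exact (add_left_injective e₁).comp (algebraMap_smul_left_injective he₀)
  · exact smul_algebraMap_smul_add (hf₀ b) (hf₁ b) a
end

section
/- Let k be a field that is not algebraic over a finite subfield, and let R be a simple left artinian k-algebra that is not a division ring. Then R contains a free noncyclic subgroup in its group of units; in particular R contains a free noncyclic subsemigroup. -/
/-!
By Wedderburn–Artin, `R ≃ₐ[k] Mₙ(D)` for a division `k`-algebra `D`, and `n ≥ 2` since `R` is not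
a division ring; so `M ↦ diag(M, 1)` embeds `M₂(k)` multiplicatively into `R`, and `GL₂(k)` into
`Rˣ`. Next, `k` receives a field `K` with an absolute value `v` and an element `t` with `v t = 2`:
`ℚ` in characteristic zero, and otherwise `𝔽_p(t)` with its valuation at infinity, for some `t`
transcendental over `𝔽_p` (which exists because `k` is not algebraic over `𝔽_p`). In `GL₂(K)`, the
matrix `A = diag(t⁵, 1)` and its conjugate by `g = [[1, 1], [1, t]]` play ping-pong on `ℙ¹(K)`:
`A` sends every line off the region where the second coordinate dominates (by a factor `4`) into
the region where the first one does, and `g` moves both regions into the balanced part. Finally, a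
free group on two elements contains the free semigroup on them, because positive words are
reduced.
-/

/-- A group `G` contains a free noncyclic subgroup if there are `x y : G`
such that the subgroup they generate is free on `{x, y}`, i.e. the canonical
group homomorphism from the free group on two generators sending the
generators to `x` and `y` is injective. -/
def HasFreeNoncyclicSubgroup (G : Type*) [Group G] : Prop :=
  ∃ x y : G, Function.Injective
    ⇑(FreeGroup.lift (fun b : Bool => if b then x else y))

open scoped Pointwise NNReal WithZero LinearAlgebra.Projectivization

open Projectivization

theorem FreeGroup.injective_freeMonoidLift_of {α : Type*} :
    Function.Injective (FreeMonoid.lift (FreeGroup.of : α → FreeGroup α)) := by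
  classical
  have hword (w : FreeMonoid α) :
      (FreeMonoid.lift FreeGroup.of w).toWord = w.toList.map (·, true) := by
    have hmk : FreeMonoid.lift FreeGroup.of w = FreeGroup.mk (w.toList.map (·, true)) := by
      rw [FreeMonoid.lift_apply]
      induction w.toList with
      | nil => rfl
      | cons a l ih => simp [ih, FreeGroup.of, FreeGroup.mul_mk]
    rw [hmk, FreeGroup.toWord_mk, FreeGroup.IsReduced.reduce_eq]
    exact (List.pairwise_map.mpr (List.pairwise_of_forall fun _ _ _ => rfl)).isChain
  intro w w' h
  have := congrArg FreeGroup.toWord h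
  rw [hword, hword] at this
  exact FreeMonoid.toList.injective <|
    List.map_injective_iff.mpr (fun a b h => (Prod.mk.inj h).1) this

theorem HasFreeNoncyclicSubgroup.of_injective {G H : Type*} [Group G] [Group H]
    (h : HasFreeNoncyclicSubgroup G) {f : G →* H} (hf : Function.Injective f) :
    HasFreeNoncyclicSubgroup H := by
  obtain ⟨x, y, hxy⟩ := h
  refine ⟨f x, f y, ?_⟩
  have : FreeGroup.lift (fun b : Bool => if b then f x else f y) =
      f.comp (FreeGroup.lift fun b : Bool => if b then x else y) :=
    FreeGroup.ext_hom _ _ fun b => by cases b <;> simp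
  rw [this, MonoidHom.coe_comp]
  exact hf.comp hxy

theorem HasFreeNoncyclicSubsemigroup.of_injective {S T : Type*} [Semigroup S] [Semigroup T]
    (h : HasFreeNoncyclicSubsemigroup S) {f : S →ₙ* T} (hf : Function.Injective f) :
    HasFreeNoncyclicSubsemigroup T := by
  obtain ⟨x, y, hxy⟩ := h
  refine ⟨f x, f y, ?_⟩
  have : FreeSemigroup.lift (fun b : Bool => if b then f x else f y) =
      f.comp (FreeSemigroup.lift fun b : Bool => if b then x else y) :=
    FreeSemigroup.hom_ext (funext fun b => by cases b <;> simp)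
  rw [this, MulHom.coe_comp]
  exact hf.comp hxy

theorem HasFreeNoncyclicSubgroup.hasFreeNoncyclicSubsemigroup {G : Type*} [Group G]
    (h : HasFreeNoncyclicSubgroup G) : HasFreeNoncyclicSubsemigroup G := by
  obtain ⟨x, y, hxy⟩ := h
  refine ⟨x, y, ?_⟩
  have : FreeSemigroup.lift (fun b : Bool => if b then x else y) =
      ((FreeGroup.lift fun b : Bool => if b then x else y).toMulHom.comp
        (FreeMonoid.lift FreeGroup.of).toMulHom).comp FreeSemigroup.toFreeMonoid :=
    FreeSemigroup.hom_ext (funext fun b => by cases b <;> simp)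
  rw [this, MulHom.coe_comp, MulHom.coe_comp]
  exact hxy.comp (FreeGroup.injective_freeMonoidLift_of.comp FreeSemigroup.toFreeMonoid_injective)

theorem Set.smul_compl_subset_iff_inv_smul_compl_subset {G α : Type*} [Group G] [MulAction G α]
    {a : G} {X Y : Set α} : a • Yᶜ ⊆ X ↔ a⁻¹ • Xᶜ ⊆ Y := by
  rw [Set.smul_set_subset_iff_subset_inv_smul_set, Set.smul_set_compl, Set.compl_subset_comm]

-- `G : Type` because `FreeGroup.injective_lift_of_ping_pong` wants the index type `Bool` in the
-- universe of `G`.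
theorem FreeGroup.injective_lift_of_ping_pong_conj {G : Type} {α : Type*} [Group G] [MulAction G α]
    {a g : G} {X Y : Set α} (hX : X.Nonempty) (hXY : Disjoint X Y) (ha : a • Yᶜ ⊆ X)
    (hg : g • (X ∪ Y) ⊆ (X ∪ Y)ᶜ) :
    Function.Injective (FreeGroup.lift fun b : Bool => if b then a else g * a * g⁻¹) := by
  rw [Set.smul_set_union, Set.subset_compl_iff_disjoint_right, Set.disjoint_union_left] at hg
  obtain ⟨hgX, hgY⟩ := hg
  have hconj : (g * a * g⁻¹) • (g • Y)ᶜ ⊆ g • X := by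
    rw [← Set.smul_set_compl, smul_smul, inv_mul_cancel_right, mul_smul]
    exact Set.smul_set_mono ha
  refine FreeGroup.injective_lift_of_ping_pong _ (fun b : Bool => cond b X (g • X))
    (fun b : Bool => cond b Y (g • Y)) ?_ ?_ ?_ ?_ ?_ ?_
  · rintro (_ | _) <;> simp [hX]
  · rintro (_ | _) (_ | _) hij <;> simp_all [Function.onFun, disjoint_comm]
  · rintro (_ | _) (_ | _) hij <;> simp_all [Function.onFun, disjoint_comm]
  · rintro (_ | _) (_ | _) <;> simp_all [Set.disjoint_smul_set, disjoint_comm]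
  · rintro (_ | _) <;> simpa
  · rintro (_ | _) <;>
      rw [Pi.inv_apply, ← Set.smul_compl_subset_iff_inv_smul_compl_subset] <;> simpa

namespace AbsoluteValue

variable {K : Type*} [Field K] (v : AbsoluteValue K ℝ)

def dominantLines (r : ℝ) (i j : Fin 2) : Set (ℙ K (Fin 2 → K)) :=
  {p | r * v (p.rep j) < v (p.rep i)}

variable {v}

theorem mk_mem_dominantLines {r : ℝ} {i j : Fin 2} {w : Fin 2 → K} (hw : w ≠ 0) :
    Projectivization.mk K w hw ∈ v.dominantLines r i j ↔ r * v (w j) < v (w i) := by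
  obtain ⟨c, hc⟩ := exists_smul_eq_mk_rep K w hw
  have hc0 : 0 < v c := v.pos c.ne_zero
  simp only [dominantLines, Set.mem_ofPred_eq, ← hc, Pi.smul_apply, Units.smul_def, smul_eq_mul,
    map_mul, mul_left_comm r]
  exact mul_lt_mul_iff_right₀ hc0

theorem disjoint_dominantLines {r : ℝ} (hr : 1 ≤ r) (i j : Fin 2) :
    Disjoint (v.dominantLines r i j) (v.dominantLines r j i) := by
  refine Set.disjoint_left.mpr fun p hij hji => ?_
  simp only [dominantLines, Set.mem_ofPred_eq] at hij hji
  nlinarith [v.nonneg (p.rep i), v.nonneg (p.rep j)]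

theorem smul_compl_dominantLines_subset {A : GL (Fin 2) K} {s : K}
    (hA : (A : Matrix (Fin 2) (Fin 2) K) = !![s, 0; 0, 1]) {r : ℝ} (hr : 0 ≤ r)
    (hrs : r ^ 2 < v s) : A • (v.dominantLines r 1 0)ᶜ ⊆ v.dominantLines r 0 1 := by
  rw [Set.smul_set_subset_iff]
  intro p hp
  induction p using Projectivization.ind with | h w hw => ?_
  rw [Set.mem_compl_iff, mk_mem_dominantLines, not_lt] at hp
  rw [smul_mk, mk_mem_dominantLines]
  have hw0 : w 0 ≠ 0 := fun h0 => hw <| by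
    have h1 : w 1 = 0 := v.eq_zero.mp (le_antisymm (by simpa [h0] using hp) (v.nonneg _))
    ext i; fin_cases i <;> assumption
  have := v.pos hw0
  simp only [hA, Matrix.GeneralLinearGroup.fin_two_smul, Matrix.of_apply, Matrix.cons_val',
    Matrix.cons_val_zero, Matrix.cons_val_one, Matrix.empty_val', Matrix.cons_val_fin_one,
    zero_mul, one_mul, add_zero, zero_add, map_mul]
  nlinarith [v.nonneg (w 1)]

theorem smul_dominantLines_subset_compl {g : GL (Fin 2) K} {t : K}
    (hg : (g : Matrix (Fin 2) (Fin 2) K) = !![1, 1; 1, t]) (ht : v t = 2) :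
    g • (v.dominantLines 4 0 1 ∪ v.dominantLines 4 1 0) ⊆
      (v.dominantLines 4 0 1 ∪ v.dominantLines 4 1 0)ᶜ := by
  rw [Set.smul_set_subset_iff]
  intro p hp
  induction p using Projectivization.ind with | h w hw => ?_
  rw [Set.mem_union, mk_mem_dominantLines, mk_mem_dominantLines] at hp
  rw [smul_mk, Set.mem_compl_iff, Set.mem_union, mk_mem_dominantLines, mk_mem_dominantLines]
  simp only [hg, Matrix.GeneralLinearGroup.fin_two_smul, Matrix.of_apply, Matrix.cons_val',
    Matrix.cons_val_zero, Matrix.cons_val_one, Matrix.empty_val', Matrix.cons_val_fin_one, one_mul]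
  have hty : v (t * w 1) = 2 * v (w 1) := by rw [map_mul, ht]
  have h₁ := v.add_le (w 0) (w 1)
  have h₂ := v.le_add (w 0) (w 1)
  have h₃ := v.le_add (w 1) (w 0)
  have h₄ := v.add_le (w 0) (t * w 1)
  have h₅ := v.le_add (w 0) (t * w 1)
  have h₆ := v.le_add (t * w 1) (w 0)
  rw [add_comm] at h₃ h₆
  rw [hty] at h₄ h₅ h₆
  rw [not_or, not_lt, not_lt]
  rcases hp with hp | hp <;> constructor <;> linarith [v.nonneg (w 0), v.nonneg (w 1)]

end AbsoluteValue

theorem AbsoluteValue.hasFreeNoncyclicSubgroup_GL_fin_two {K : Type} [Field K]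
    (v : AbsoluteValue K ℝ) {t : K} (ht : v t = 2) : HasFreeNoncyclicSubgroup (GL (Fin 2) K) := by
  have ht0 : t ≠ 0 := v.ne_zero_iff.mp (by rw [ht]; norm_num)
  have ht1 : t ≠ 1 := fun h => by norm_num [h] at ht
  let A := Matrix.GeneralLinearGroup.mkOfDetNeZero !![t ^ 5, 0; 0, 1] (by simp [ht0])
  let g := Matrix.GeneralLinearGroup.mkOfDetNeZero !![1, 1; 1, t] (by simp [sub_ne_zero.mpr ht1])
  refine ⟨A, g * A * g⁻¹, FreeGroup.injective_lift_of_ping_pong_conj ?_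
    (v.disjoint_dominantLines (r := 4) (by norm_num) 0 1)
    (v.smul_compl_dominantLines_subset (A := A) (s := t ^ 5) (r := 4) rfl (by norm_num)
      (by rw [v.map_pow, ht]; norm_num))
    (v.smul_dominantLines_subset_compl (g := g) rfl ht)⟩
  exact ⟨Projectivization.mk K ![1, 0] (by simp), by simp [AbsoluteValue.mk_mem_dominantLines]⟩

noncomputable def Valuation.toAbsoluteValue {K : Type*} [Field K] (w : Valuation K ℤᵐ⁰) {e : ℝ≥0}
    (he : 1 < e) : AbsoluteValue K ℝ where
  toFun x := WithZeroMulInt.toNNReal he.ne_zero (w x)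
  map_mul' x y := by simp
  nonneg' x := NNReal.coe_nonneg _
  eq_zero' x := by simp
  add_le' x y := by
    have := (WithZeroMulInt.toNNReal_strictMono he).monotone (w.map_add x y)
    rw [Monotone.map_max (WithZeroMulInt.toNNReal_strictMono he).monotone] at this
    show ((_ : ℝ≥0) : ℝ) ≤ (_ : ℝ≥0) + (_ : ℝ≥0)
    exact_mod_cast this.trans (max_le_add_of_nonneg (by positivity) (by positivity))

theorem NotAlgebraicOverFiniteSubfield.exists_injective_eval₂ {k : Type*} [Field k]
    (hk : NotAlgebraicOverFiniteSubfield k) {F : Type*} [Field F] [Finite F] (c : F →+* k) :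
    ∃ t : k, Function.Injective (Polynomial.eval₂RingHom c t) := by
  by_contra! h
  refine hk ⟨c.fieldRange, .of_surjective _ c.rangeRestrictField_bijective.2, fun t => ?_⟩
  have ht := h t
  rw [injective_iff_map_eq_zero] at ht
  push Not at ht
  obtain ⟨q, hq, hq0⟩ := ht
  refine ⟨q.map c.rangeRestrictField,
    (Polynomial.map_ne_zero_iff c.rangeRestrictField.injective).mpr hq0, ?_⟩
  rwa [Polynomial.aeval_def, Polynomial.eval₂_map]

theorem NotAlgebraicOverFiniteSubfield.exists_absoluteValue_eq_two {k : Type*} [Field k]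
    (hk : NotAlgebraicOverFiniteSubfield k) :
    ∃ (K : Type) (_ : Field K) (v : AbsoluteValue K ℝ) (t : K), v t = 2 ∧ Nonempty (K →+* k) := by
  obtain ⟨p, _⟩ := CharP.exists k
  rcases CharP.char_is_prime_or_zero k p with hp | rfl
  · have := Fact.mk hp
    obtain ⟨t, ht⟩ := hk.exists_injective_eval₂ (ZMod.castHom (dvd_refl p) k)
    classical
    refine ⟨RatFunc (ZMod p), inferInstance, (RatFunc.inftyValuation _).toAbsoluteValue one_lt_two,
      RatFunc.X, ?_, ⟨IsFractionRing.lift ht⟩⟩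
    simp [Valuation.toAbsoluteValue, WithZeroMulInt.toNNReal_neg_apply,
      WithZero.toAdd_unzero_eq_log]
  · have := CharP.charP_to_charZero k
    exact ⟨ℚ, inferInstance, Rat.AbsoluteValue.real, 2, by simp, ⟨Rat.castHom k⟩⟩

def Matrix.fromBlocksOneHom (m n α : Type*) [Fintype m] [Fintype n] [DecidableEq m]
    [DecidableEq n] [Semiring α] : Matrix m m α →* Matrix (m ⊕ n) (m ⊕ n) α where
  toFun M := Matrix.fromBlocks M 0 0 1
  map_one' := Matrix.fromBlocks_one
  map_mul' M N := by simp [Matrix.fromBlocks_multiply]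

theorem Matrix.fromBlocksOneHom_injective (m n α : Type*) [Fintype m] [Fintype n] [DecidableEq m]
    [DecidableEq n] [Semiring α] : Function.Injective (Matrix.fromBlocksOneHom m n α) :=
  fun _ _ h => (Matrix.fromBlocks_inj.mp h).1

theorem IsSimpleRing.exists_monoidHom_matrix_fin_two_injective (k R : Type*) [Field k] [Ring R]
    [Algebra k R] [IsSimpleRing R] [IsArtinianRing R] (hdiv : ¬ ∀ x : R, x ≠ 0 → IsUnit x) :
    ∃ f : Matrix (Fin 2) (Fin 2) k →* R, Function.Injective f := by
  obtain ⟨n, _, D, _, _, ⟨e⟩⟩ := IsSimpleRing.exists_algEquiv_matrix_divisionRing k R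
  have hn : 2 ≤ n := by
    by_contra! hn
    obtain rfl : n = 1 := by have := NeZero.ne n; omega
    let φ : R ≃+* D := e.toRingEquiv.trans Matrix.uniqueRingEquiv
    exact hdiv fun x hx => (isUnit_map_iff φ x).mp (isUnit_iff_ne_zero.mpr (by simpa using hx))
  obtain ⟨m, rfl⟩ := Nat.exists_eq_add_of_le hn
  let ι : Matrix (Fin 2) (Fin 2) k →* Matrix (Fin 2) (Fin 2) D :=
    (algebraMap k D).mapMatrix.toMonoidHom
  let ρ : Matrix (Fin 2 ⊕ Fin m) (Fin 2 ⊕ Fin m) D →* Matrix (Fin (2 + m)) (Fin (2 + m)) D :=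
    (Matrix.reindexAlgEquiv k D finSumFinEquiv).toRingEquiv.toMonoidHom
  let ε : Matrix (Fin (2 + m)) (Fin (2 + m)) D →* R := e.symm.toRingEquiv.toMonoidHom
  refine ⟨ε.comp (ρ.comp ((Matrix.fromBlocksOneHom _ _ _).comp ι)), ?_⟩
  simp only [MonoidHom.coe_comp]
  exact e.symm.injective.comp <| (Matrix.reindexAlgEquiv k D finSumFinEquiv).injective.comp <|
    (Matrix.fromBlocksOneHom_injective _ _ _).comp <|
      Matrix.map_injective (algebraMap k D).injective

/-- If `k` is a field not algebraic over a finite subfield and `R` is a simple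
left artinian `k`-algebra which is not a division ring, then the group of
units of `R` contains a free noncyclic subgroup; in particular `R` contains a
free noncyclic subsemigroup. -/
theorem simple_artinian_not_division_has_free_subgroup
    {k R : Type*} [Field k] (hk : NotAlgebraicOverFiniteSubfield k)
    [Ring R] [Algebra k R] [IsSimpleRing R] [IsArtinianRing R]
    (hdiv : ¬ ∀ x : R, x ≠ 0 → IsUnit x) :
    HasFreeNoncyclicSubgroup Rˣ ∧ HasFreeNoncyclicSubsemigroup R := by
  obtain ⟨K, _, v, t, hvt, ⟨ι⟩⟩ := hk.exists_absoluteValue_eq_two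
  obtain ⟨f, hf⟩ := IsSimpleRing.exists_monoidHom_matrix_fin_two_injective k R hdiv
  have hR : HasFreeNoncyclicSubgroup Rˣ :=
    (v.hasFreeNoncyclicSubgroup_GL_fin_two hvt).of_injective <|
      Units.map_injective (f := f.comp ι.mapMatrix.toMonoidHom) <|
        hf.comp (Matrix.map_injective ι.injective)
  exact ⟨hR, hR.hasFreeNoncyclicSubsemigroup.of_injective (f := (Units.coeHom R).toMulHom)
    Units.val_injective⟩
end
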